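/- arXiv:1911.07455 — 3 statements merged into one kernel-verified Lean document; each statement's English description precedes it below -/
import Mathlib

section
/- Let X be a metric space. Then for every pseudo-cone P of X, the lower Assouad dimension of X is at most the lower Assouad dimension of P: dim_LA X ≤ dim_LA P. -/
open Metric Filter Set
open scoped ENNReal NNReal Topology

noncomputable section

universe u v

/-! ### Scaling of metric spaces -/

/-- The metric space obtained from `m` by multiplying the metric by `h > 0`
(the space `hX` of the paper). -/
def scaleMS {X : Type*} (h : ℝ) (hh : 0 < h) (m : MetricSpace X) : MetricSpace X := by
  letI := m
  exact MetricSpace.ofDistTopology (fun x y => h * dist x y)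
    (fun x => by simp)
    (fun x y => by simp [dist_comm])
    (fun x y z => by
      show h * dist x z ≤ h * dist x y + h * dist y z
      have := dist_triangle x y z
      nlinarith)
    (fun s => by
      rw [Metric.isOpen_iff]
      constructor
      · rintro H x hx
        obtain ⟨ε, hε, h'⟩ := H x hx
        refine ⟨h * ε, by positivity, fun y (hy : h * dist x y < h * ε) => h' ?_⟩
        have := lt_of_mul_lt_mul_left hy hh.le
        simpa [Metric.mem_ball, dist_comm] using this
      · rintro H x hx
        obtain ⟨ε, hε, h'⟩ := H x hx
        refine ⟨ε / h, by positivity, fun y hy => h' y ?_⟩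
        have hb : dist x y < ε / h := by
          have : dist y x < ε / h := hy
          simpa [dist_comm] using this
        show h * dist x y < ε
        calc h * dist x y < h * (ε / h) := mul_lt_mul_of_pos_left hb hh
          _ = ε := by field_simp)
    (fun x y hxy => by
      have hd : dist x y = 0 := by
        have h0 : dist x y ≥ 0 := dist_nonneg
        have : h * dist x y = 0 := hxy
        nlinarith
      exact eq_of_dist_eq_zero hd)

/-- The scaled metric on a subset `A` of a metric space (the space `hA`). -/
def scaledSubMS {X : Type*} [MetricSpace X] (A : Set X) (h : ℝ) (hh : 0 < h) :
    MetricSpace A := scaleMS h hh inferInstance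

/-! ### The Gromov–Hausdorff distance and pseudo-cones -/

/-- The Gromov–Hausdorff distance between two (arbitrary) metric spaces: the infimum of the
Hausdorff distances between isometric copies of the two spaces inside a common metric
space. -/
def ghDist (X : Type u) (Y : Type v) [MetricSpace X] [MetricSpace Y] : ℝ≥0∞ :=
  ⨅ (Z : Type (max u v)) (_ : MetricSpace Z) (f : X → Z) (g : Y → Z)
    (_ : Isometry f) (_ : Isometry g),
      EMetric.hausdorffEdist (Set.range f) (Set.range g)

/-- `P` is a pseudo-cone of `X` if it is the Gromov–Hausdorff limit of a sequence `uᵢAᵢ`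
of rescaled subsets of `X`. -/
def IsPseudoCone (X : Type u) [MetricSpace X] (P : Type v) [MetricSpace P] : Prop :=
  ∃ (A : ℕ → Set X) (u : ℕ → ℝ) (hu : ∀ i, 0 < u i),
    Tendsto (fun i => @ghDist ↥(A i) P (scaledSubMS (A i) (u i) (hu i)) _) atTop (𝓝 0)

/-- `P` is a pseudo-cone of `X` approximated by a sequence of *compact* subsets of `X`
(`P ∈ kpc(X)`). -/
def IsCompactPseudoCone (X : Type u) [MetricSpace X] (P : Type v) [MetricSpace P] : Prop :=
  ∃ (A : ℕ → Set X) (u : ℕ → ℝ) (hu : ∀ i, 0 < u i),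
    (∀ i, IsCompact (A i)) ∧
    Tendsto (fun i => @ghDist ↥(A i) P (scaledSubMS (A i) (u i) (hu i)) _) atTop (𝓝 0)

/-! ### Assouad dimensions -/

/-- The set `𝒜(X)` of Assouad exponents: `β > 0` such that for some `C > 0` every bounded
set `S` can be covered, for every `r > 0`, by at most `C (δ(S)/r)^β` bounded sets of
diameter at most `r`. -/
def assouadExpSet (X : Type u) [MetricSpace X] : Set ℝ :=
  {β | 0 < β ∧ ∃ C : ℝ, 0 < C ∧ ∀ S : Set X, Bornology.IsBounded S → ∀ r : ℝ, 0 < r →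
    ∃ F : Finset (Set X), (∀ t ∈ F, Bornology.IsBounded t ∧ Metric.diam t ≤ r) ∧
      S ⊆ ⋃ t ∈ F, t ∧ (F.card : ℝ) ≤ C * (Metric.diam S / r) ^ β}

/-- The Assouad dimension of a metric space, with values in `ℝ≥0∞`
(equal to `∞` if no exponent works, since `sInf ∅ = ⊤`). -/
def assouadDim (X : Type u) [MetricSpace X] : ℝ≥0∞ :=
  sInf (ENNReal.ofReal '' assouadExpSet X)

/-- The set `𝓑(X)`: exponents `β > 0` such that for some `C > 0` every finite subset `A`
of `X` satisfies `card A ≤ C (δ(A)/α(A))^β`, where `δ` is the diameter and `α` the minimal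
positive separation. -/
def assouadFinSet (X : Type u) [MetricSpace X] : Set ℝ :=
  {β | 0 < β ∧ ∃ C : ℝ, 0 < C ∧ ∀ A : Finset X,
    (A.card : ℝ) ≤ C * (Metric.diam (A : Set X) / Set.infsep (A : Set X)) ^ β}

/-- The lower Assouad dimension of a metric space: the supremum of all `β > 0` such that
for some `C > 0` every finite set `S` satisfies `card S ≥ C (δ(S)/α(S))^β`. -/
def lowerAssouadDim (X : Type u) [MetricSpace X] : ℝ≥0∞ :=
  sSup (ENNReal.ofReal ''
    {β : ℝ | 0 < β ∧ ∃ C : ℝ, 0 < C ∧ ∀ S : Finset X,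
      C * (Metric.diam (S : Set X) / Set.infsep (S : Set X)) ^ β ≤ (S.card : ℝ)})

/-- A metric space is doubling if there is `N` such that every bounded set `S` is contained
in the union of at most `N` closed balls of radius `δ(S)/2`. -/
def IsDoublingSpace (X : Type u) [MetricSpace X] : Prop :=
  ∃ N : ℕ, ∀ S : Set X, Bornology.IsBounded S →
    ∃ F : Finset X, F.card ≤ N ∧ S ⊆ ⋃ x ∈ F, Metric.closedBall x (Metric.diam S / 2)

/-! ### Quasi-symmetric maps and the conformal Assouad dimension -/

/-- `f : X → Y` is a quasi-symmetric map: a homeomorphism which is `η`-quasi-symmetric for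
some homeomorphism `η` of `[0,∞)` (modelled as `ℝ≥0`). -/
def IsQuasiSymmetric {X : Type u} {Y : Type v} [MetricSpace X] [MetricSpace Y]
    (f : X → Y) : Prop :=
  IsHomeomorph f ∧ ∃ η : ℝ≥0 → ℝ≥0, IsHomeomorph η ∧
    ∀ (t : ℝ≥0) (x y z : X), dist x y ≤ (t : ℝ) * dist x z →
      dist (f x) (f y) ≤ (η t : ℝ) * dist (f x) (f z)

/-- The conformal Assouad dimension: the infimum of the Assouad dimensions of all
quasi-symmetric images of `X`. -/
def confAssouadDim (X : Type u) [MetricSpace X] : ℝ≥0∞ :=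
  ⨅ (Y : Type u) (_ : MetricSpace Y) (f : X → Y) (_ : IsQuasiSymmetric f), assouadDim Y

/-! ### Ultralimits -/

/-- The limit of a sequence in `ℝ≥0∞` along an ultrafilter (it always exists, by
compactness of `ℝ≥0∞`). -/
def ultraLim (𝒰 : Ultrafilter ℕ) (f : ℕ → ℝ≥0∞) : ℝ≥0∞ := (𝒰.map f).lim

theorem tendsto_ultraLim (𝒰 : Ultrafilter ℕ) (f : ℕ → ℝ≥0∞) :
    Tendsto f 𝒰 (𝓝 (ultraLim 𝒰 f)) := by
  have := (𝒰.map f).le_nhds_lim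
  rwa [Ultrafilter.coe_map] at this

theorem ultraLim_eq (𝒰 : Ultrafilter ℕ) {f : ℕ → ℝ≥0∞} {a : ℝ≥0∞}
    (h : Tendsto f 𝒰 (𝓝 a)) : ultraLim 𝒰 f = a :=
  tendsto_nhds_unique (tendsto_ultraLim 𝒰 f) h

/-- Type synonym for the product `∀ i, X i`, carrying the ultralimit
pseudo-extended-metric `edist x y = lim_𝒰 edist (x i) (y i)`. -/
def PreUltralimit (𝒰 : Ultrafilter ℕ) (X : ℕ → Type u) : Type u := ∀ i, X i

instance PreUltralimit.pseudoEMetricSpace (𝒰 : Ultrafilter ℕ) (X : ℕ → Type u)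
    [∀ i, MetricSpace (X i)] : PseudoEMetricSpace (PreUltralimit 𝒰 X) where
  edist x y := ultraLim 𝒰 fun i => edist (x i) (y i)
  edist_self x := ultraLim_eq 𝒰 (by simp [tendsto_const_nhds])
  edist_comm x y := by simp only [edist_comm]
  edist_triangle x y z := by
    have hxy := tendsto_ultraLim 𝒰 fun i => edist (x i) (y i)
    have hyz := tendsto_ultraLim 𝒰 fun i => edist (y i) (z i)
    have hxz := tendsto_ultraLim 𝒰 fun i => edist (x i) (z i)
    exact le_of_tendsto_of_tendsto' hxz (hxy.add hyz) fun i => edist_triangle _ _ _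

/-- The class of the base point sequence in the separation quotient. -/
def ultralimitRefPt (𝒰 : Ultrafilter ℕ) (X : ℕ → Type u) [∀ i, MetricSpace (X i)]
    (p : ∀ i, X i) : SeparationQuotient (PreUltralimit 𝒰 X) :=
  SeparationQuotient.mk p

/-- The ultralimit of a sequence of pointed metric spaces with respect to an ultrafilter:
sequences at finite limit distance from the base point sequence, two sequences being
identified when the ultralimit of their mutual distances vanishes. -/
def Ultralimit (𝒰 : Ultrafilter ℕ) (X : ℕ → Type u) [∀ i, MetricSpace (X i)]
    (p : ∀ i, X i) : Type u :=
  { q : SeparationQuotient (PreUltralimit 𝒰 X) // edist q (ultralimitRefPt 𝒰 X p) ≠ ⊤ }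

instance Ultralimit.emetricSpace (𝒰 : Ultrafilter ℕ) (X : ℕ → Type u)
    [∀ i, MetricSpace (X i)] (p : ∀ i, X i) : EMetricSpace (Ultralimit 𝒰 X p) := by
  unfold Ultralimit; infer_instance

instance Ultralimit.metricSpace (𝒰 : Ultrafilter ℕ) (X : ℕ → Type u)
    [∀ i, MetricSpace (X i)] (p : ∀ i, X i) : MetricSpace (Ultralimit 𝒰 X p) :=
  EMetricSpace.toMetricSpace (by
    rintro ⟨x, hx⟩ ⟨y, hy⟩
    show edist x y ≠ ⊤
    have h1 : edist x y ≤ edist x (ultralimitRefPt 𝒰 X p) +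
        edist (ultralimitRefPt 𝒰 X p) y := edist_triangle _ _ _
    have h2 : edist x (ultralimitRefPt 𝒰 X p) + edist (ultralimitRefPt 𝒰 X p) y ≠ ⊤ :=
      ENNReal.add_ne_top.2 ⟨hx, by rw [edist_comm]; exact hy⟩
    exact fun h => h2 (top_le_iff.1 (h ▸ h1)))

/-- The canonical base point of an ultralimit. -/
def Ultralimit.basePt (𝒰 : Ultrafilter ℕ) (X : ℕ → Type u) [∀ i, MetricSpace (X i)]
    (p : ∀ i, X i) : Ultralimit 𝒰 X p :=
  ⟨ultralimitRefPt 𝒰 X p, by simp⟩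

/-! ### Pointed Gromov–Hausdorff convergence, cones -/

/-- An `ε`-approximation between two metric spaces. -/
def IsApproximation {X : Type u} {Y : Type v} [MetricSpace X] [MetricSpace Y]
    (ε : ℝ) (f : X → Y) (g : Y → X) : Prop :=
  (∀ x y : X, |dist x y - dist (f x) (f y)| < ε) ∧
  (∀ x y : Y, |dist x y - dist (g x) (g y)| < ε) ∧
  (∀ x : X, dist (g (f x)) x < ε) ∧
  (∀ y : Y, dist (f (g y)) y < ε)

/-- Convergence of a sequence of pointed metric spaces in the pointed Gromov–Hausdorff
topology, via approximation maps respecting the base points. -/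
def TendstoPointedGH (X : ℕ → Type u) [∀ i, MetricSpace (X i)] (p : ∀ i, X i)
    (Y : Type v) [MetricSpace Y] (q : Y) : Prop :=
  ∃ (ε : ℕ → ℝ) (f : ∀ i, X i → Y) (g : ∀ i, Y → X i),
    (∀ i, 0 < ε i) ∧ Tendsto ε atTop (𝓝 0) ∧
    ∀ i, IsApproximation (ε i) (f i) (g i) ∧ f i (p i) = q ∧ g i q = p i

/-- `(Y, y)` is a tangent cone of `X` at `p`: there are points `pᵢ → p` and scales
`rᵢ → ∞` such that for every `R > 0` the rescaled closed balls `rᵢ B(pᵢ, R/rᵢ)` converge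
to `B(y, R)` in the pointed Gromov–Hausdorff topology. -/
def IsTangentCone (X : Type u) [MetricSpace X] (p : X) (Y : Type v) [MetricSpace Y]
    (y : Y) : Prop :=
  ∃ (pt : ℕ → X) (r : ℕ → ℝ) (hr : ∀ i, 0 < r i),
    Tendsto pt atTop (𝓝 p) ∧ Tendsto r atTop atTop ∧
    ∀ (R : ℝ) (hR : 0 < R),
      @TendstoPointedGH (fun i => ↥(Metric.closedBall (pt i) (R / r i)))
        (fun i => scaledSubMS _ (r i) (hr i))
        (fun i => ⟨pt i, Metric.mem_closedBall_self (le_of_lt (div_pos hR (hr i)))⟩)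
        ↥(Metric.closedBall y R) _ ⟨y, Metric.mem_closedBall_self hR.le⟩

/-- `(Y, y)` is an asymptotic cone of `X` at `p`: as for tangent cones, but with
scales `rᵢ → 0`. -/
def IsAsymptoticCone (X : Type u) [MetricSpace X] (p : X) (Y : Type v) [MetricSpace Y]
    (y : Y) : Prop :=
  ∃ (pt : ℕ → X) (r : ℕ → ℝ) (hr : ∀ i, 0 < r i),
    Tendsto pt atTop (𝓝 p) ∧ Tendsto r atTop (𝓝 0) ∧
    ∀ (R : ℝ) (hR : 0 < R),
      @TendstoPointedGH (fun i => ↥(Metric.closedBall (pt i) (R / r i)))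
        (fun i => scaledSubMS _ (r i) (hr i))
        (fun i => ⟨pt i, Metric.mem_closedBall_self (le_of_lt (div_pos hR (hr i)))⟩)
        ↥(Metric.closedBall y R) _ ⟨y, Metric.mem_closedBall_self hR.le⟩

/-! ### Length spaces and `(ω₀+1)`-spaces -/

/-- A length space: the (extended) distance between two points is the infimum of the
lengths of the paths joining them. -/
def IsLengthSpace (X : Type u) [MetricSpace X] : Prop :=
  ∀ x y : X, edist x y = ⨅ γ : Path x y, eVariationOn γ Set.univ

/-- A metric space whose topology is that of the one-point compactification of a countable
discrete space. -/
def IsOmegaPlusOneSpace (X : Type u) [TopologicalSpace X] : Prop :=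
  Nonempty (X ≃ₜ OnePoint ℕ)


/-- Distances in the scaled subspace metric. -/
theorem scaledSubMS_dist {X : Type u} [MetricSpace X] (A : Set X) (u : ℝ) (hu : 0 < u)
    (x y : A) : @dist _ (scaledSubMS A u hu).toDist x y = u * dist (x : X) (y : X) := rfl

/-- From a small Gromov–Hausdorff distance, extract a map almost preserving distances. -/
theorem ghDist_key {Y : Type u} {P : Type v} [MetricSpace Y] [MetricSpace P] {ε : ℝ}
    (h : ghDist Y P < ENNReal.ofReal ε) :
    ∃ F : P → Y, ∀ s t : P, |dist (F s) (F t) - dist s t| ≤ 2 * ε := by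
  simp only [ghDist, iInf_lt_iff] at h
  obtain ⟨Z, inst, f, g, hf, hg, hlt⟩ := h
  have key : ∀ s : P, ∃ a : Y, dist (g s) (f a) < ε := by
    intro s
    have h1 : EMetric.infEdist (g s) (Set.range f) < ENNReal.ofReal ε :=
      lt_of_le_of_lt (EMetric.infEdist_le_hausdorffEdist_of_mem (Set.mem_range_self s))
        (by rwa [EMetric.hausdorffEdist_comm])
    rw [EMetric.infEdist, EMetric.infEdist_lt_iff] at h1
    obtain ⟨y, ⟨a, rfl⟩, hy⟩ := h1
    exact ⟨a, by rwa [edist_lt_ofReal] at hy⟩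
  choose F hF using key
  refine ⟨F, fun s t => ?_⟩
  have e1 : dist (f (F s)) (f (F t)) = dist (F s) (F t) := hf.dist_eq _ _
  have e2 : dist (g s) (g t) = dist s t := hg.dist_eq _ _
  have := dist_dist_dist_le (f (F s)) (f (F t)) (g s) (g t)
  rw [e1, e2, Real.dist_eq] at this
  have h3 := (hF s).le
  have h4 := (hF t).le
  rw [dist_comm] at h3 h4
  linarith [this, dist_comm (g s) (f (F s)) ▸ h3]

/-- **Theorem 3.6.** If `P` is a pseudo-cone of `X`, then `dim_LA X ≤ dim_LA P`. -/
theorem lowerAssouadDim_le_of_isPseudoCone {X : Type u} {P : Type v}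
    [MetricSpace X] [MetricSpace P] (h : IsPseudoCone X P) :
    lowerAssouadDim X ≤ lowerAssouadDim P := by
  refine sSup_le ?_
  rintro b ⟨β, ⟨hβ, C, hC, hX⟩, rfl⟩
  refine le_sSup ⟨β, ⟨hβ, C / 3 ^ β, by positivity, fun S => ?_⟩, rfl⟩
  classical
  by_cases hnt : (S : Set P).Nontrivial
  swap
  · rw [not_nontrivial_iff] at hnt
    rw [hnt.infsep_zero, div_zero, Real.zero_rpow hβ.ne', mul_zero]
    positivity
  -- Notation
  set a := Set.infsep (S : Set P) with ha
  set δ := Metric.diam (S : Set P) with hδ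
  have hεpos : 0 < a := (S.finite_toSet.infsep_pos_iff_nontrivial).2 hnt
  have hSbdd : Bornology.IsBounded (S : Set P) := S.finite_toSet.isBounded
  have haδ : a ≤ δ := by
    obtain ⟨x, hx, y, hy, hxy⟩ := hnt
    exact le_trans (Set.infsep_le_dist_of_mem hx hy hxy) (Metric.dist_le_diam_of_mem hSbdd hx hy)
  set ε := a / 8 with hε
  have hε8 : 0 < ε := by positivity
  -- extract a good index from the pseudo-cone hypothesis
  obtain ⟨A, u, hu, htend⟩ := h
  obtain ⟨i, hlt⟩ := (htend.eventually_lt_const (ENNReal.ofReal_pos.2 hε8)).exists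
  obtain ⟨F, hF⟩ :=
    @ghDist_key ↥(A i) P (scaledSubMS (A i) (u i) (hu i)) _ ε hlt
  set G : P → X := fun s => (F s : X) with hG
  have hF' : ∀ s t : P, |u i * dist (G s) (G t) - dist s t| ≤ 2 * ε := by
    intro s t
    simp only [hG]
    have := hF s t
    rwa [scaledSubMS_dist] at this
  -- injectivity on S
  have hinj : Set.InjOn G (S : Set P) := by
    intro s hs t ht hst
    by_contra hne
    have h1 : a ≤ dist s t := Set.infsep_le_dist_of_mem hs ht hne
    have h2 := hF' s t
    rw [hG] at hst
    simp only [hG, hst, dist_self, mul_zero, zero_sub, abs_neg, abs_of_nonneg dist_nonneg] at h2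
    have : (0:ℝ) < a := hεpos
    rw [hε] at h2
    linarith
  set T : Finset X := S.image G with hT
  have hcard : T.card = S.card := Finset.card_image_of_injOn hinj
  have hTbdd : Bornology.IsBounded (T : Set X) := T.finite_toSet.isBounded
  have hui : 0 < u i := hu i
  -- lower bound on diam T
  obtain ⟨x, hx, y, hy, hdxy⟩ : ∃ x ∈ (S : Set P), ∃ y ∈ (S : Set P), δ - ε < dist x y := by
    by_contra hcon
    push_neg at hcon
    have : δ ≤ δ - ε := Metric.diam_le_of_forall_dist_le (by rw [hε]; linarith) hcon
    linarith
  have hGxy : (δ - 3 * ε) / u i ≤ dist (G x) (G y) := by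
    have h2 := hF' x y
    rw [abs_le] at h2
    rw [div_le_iff₀ hui, mul_comm (dist (G x) (G y)) (u i)]
    linarith [h2.1]
  have hGx : G x ∈ (T : Set X) := Finset.mem_coe.2 (Finset.mem_image_of_mem G hx)
  have hGy : G y ∈ (T : Set X) := Finset.mem_coe.2 (Finset.mem_image_of_mem G hy)
  have hdiamT : (δ - 3 * ε) / u i ≤ Metric.diam (T : Set X) :=
    le_trans hGxy (Metric.dist_le_diam_of_mem hTbdd hGx hGy)
  -- upper bound on infsep T
  obtain ⟨p, hp, q, hq, hpq, hdpq⟩ : ∃ p ∈ (S : Set P), ∃ q ∈ (S : Set P), p ≠ q ∧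
      dist p q < a + ε := by
    have := (hnt.infsep_lt_iff (d := a + ε)).1 (by rw [← ha]; linarith)
    obtain ⟨p, hp, q, hq, hpq, hd⟩ := this
    exact ⟨p, hp, q, hq, hpq, hd⟩
  have hGpq : dist (G p) (G q) ≤ (a + 3 * ε) / u i := by
    have h2 := hF' p q
    rw [abs_le] at h2
    rw [le_div_iff₀ hui, mul_comm (dist (G p) (G q)) (u i)]
    linarith [h2.2]
  have hGpqne : G p ≠ G q := fun hcon => hpq (hinj hp hq hcon)
  have hinfsepT : Set.infsep (T : Set X) ≤ (a + 3 * ε) / u i :=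
    le_trans (Set.infsep_le_dist_of_mem (Finset.mem_coe.2 (Finset.mem_image_of_mem G hp))
      (Finset.mem_coe.2 (Finset.mem_image_of_mem G hq)) hGpqne) hGpq
  have hTnt : (T : Set X).Nontrivial :=
    ⟨G p, Finset.mem_coe.2 (Finset.mem_image_of_mem G hp),
     G q, Finset.mem_coe.2 (Finset.mem_image_of_mem G hq), hGpqne⟩
  have hinfsepTpos : 0 < Set.infsep (T : Set X) :=
    (T.finite_toSet.infsep_pos_iff_nontrivial).2 hTnt
  -- ratio comparison
  have hratio : δ / (3 * a) ≤ Metric.diam (T : Set X) / Set.infsep (T : Set X) := by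
    have hu0 : u i ≠ 0 := hui.ne'
    have ha3 : (0:ℝ) < a + 3 * ε := by positivity
    have h2 : ((δ - 3 * ε) / u i) / ((a + 3 * ε) / u i) = (δ - 3 * ε) / (a + 3 * ε) := by
      rw [div_div_div_cancel_right₀]
      exact hu0
    have key : δ / (3 * a) ≤ ((δ - 3 * ε) / u i) / ((a + 3 * ε) / u i) := by
      rw [h2, div_le_div_iff₀ (by positivity) ha3]
      rw [hε]
      nlinarith
    exact le_trans key (div_le_div₀ Metric.diam_nonneg hdiamT hinfsepTpos hinfsepT)
  -- conclude
  have h30 : (0:ℝ) < 3 ^ β := Real.rpow_pos_of_pos (by norm_num) β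
  have hsplit : δ / (3 * a) = (δ / a) / 3 := by
    rw [div_div]
    ring_nf
  have hnn : 0 ≤ δ / (3 * a) := by positivity
  calc C / 3 ^ β * (δ / a) ^ β = C * ((δ / a) / 3) ^ β := by
        rw [Real.div_rpow (by positivity) (by norm_num : (0:ℝ) ≤ 3)]
        field_simp
    _ = C * (δ / (3 * a)) ^ β := by rw [hsplit]
    _ ≤ C * (Metric.diam (T : Set X) / Set.infsep (T : Set X)) ^ β := by
        apply mul_le_mul_of_nonneg_left _ hC.le
        exact Real.rpow_le_rpow hnn hratio hβ.le
    _ ≤ (T.card : ℝ) := hX T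
    _ = (S.card : ℝ) := by rw [hcard]

end
end

section
/- Let X be a metric space, {A_i} a sequence of subsets of X, {u_i} a sequence in (0,∞), and a_i ∈ A_i for each i ∈ ℕ. Then for every non-principal ultrafilter 𝒰 on ℕ, the lower Assouad dimension of X is at most the lower Assouad dimension of the ultralimit lim_𝒰 (u_i A_i, a_i). -/
open Metric Filter Set
open scoped ENNReal NNReal Topology

noncomputable section

universe u v

/-! ### Auxiliary lemmas for Theorem 3.7 -/

private lemma exists_lt_dist_of_lt_diam {Y : Type*} [PseudoMetricSpace Y] {s : Set Y}
    {d : ℝ} (hd : 0 ≤ d) (h : d < Metric.diam s) :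
    ∃ x ∈ s, ∃ y ∈ s, d < dist x y := by
  by_contra hc
  push_neg at hc
  exact absurd (Metric.diam_le_of_forall_dist_le hd hc) (not_le.2 h)

private lemma scaled_dist_eq {X : Type u} [MetricSpace X] (A' : Set X) (h : ℝ) (hh : 0 < h)
    (x y : A') : @dist _ (scaledSubMS A' h hh).toDist x y = h * dist (x : X) (y : X) := rfl

private lemma tendsto_dist_ultralimit {𝒰 : Ultrafilter ℕ} {Xf : ℕ → Type u}
    [∀ i, MetricSpace (Xf i)] {p : ∀ i, Xf i}
    (s t : Ultralimit 𝒰 Xf p) (x y : PreUltralimit 𝒰 Xf)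
    (hx : SeparationQuotient.mk x = s.1) (hy : SeparationQuotient.mk y = t.1) :
    Tendsto (fun i => dist (x i) (y i)) 𝒰 (𝓝 (dist s t)) := by
  have h1 : edist s t = ultraLim 𝒰 (fun i => edist (x i) (y i)) := by
    have h0 : edist s t = edist s.1 t.1 := rfl
    rw [h0, ← hx, ← hy, SeparationQuotient.edist_mk]
    rfl
  have h2 := tendsto_ultraLim 𝒰 (fun i => edist (x i) (y i))
  rw [← h1] at h2
  have h3 := (ENNReal.tendsto_toReal (edist_ne_top s t)).comp h2
  have h4 : ((fun z : ℝ≥0∞ => z.toReal) ∘ fun i => edist (x i) (y i))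
      = fun i => dist (x i) (y i) := by
    funext i
    exact (dist_edist _ _).symm
  rw [h4] at h3
  rwa [← dist_edist] at h3

private lemma lower_est_ultralimit {Xf : ℕ → Type u} [∀ i, MetricSpace (Xf i)]
    {X : Type v} [MetricSpace X] (e : ∀ i, Xf i → X) (w : ℕ → ℝ) (hw : ∀ i, 0 < w i)
    (he : ∀ (i : ℕ) (x y : Xf i), dist x y = w i * dist (e i x) (e i y))
    (p : ∀ i, Xf i) (𝒰 : Ultrafilter ℕ) {β C : ℝ} (hβ : 0 < β) (hC : 0 < C)
    (hX : ∀ T : Finset X,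
      C * (Metric.diam (T : Set X) / Set.infsep (T : Set X)) ^ β ≤ (T.card : ℝ))
    (S : Finset (Ultralimit 𝒰 Xf p)) :
    C * (Metric.diam (S : Set (Ultralimit 𝒰 Xf p)) /
        Set.infsep (S : Set (Ultralimit 𝒰 Xf p))) ^ β ≤ (S.card : ℝ) := by
  classical
  by_cases hS : (S : Set (Ultralimit 𝒰 Xf p)).Nontrivial
  swap
  · rw [Set.not_nontrivial_iff] at hS
    rw [Metric.diam_subsingleton hS, zero_div, Real.zero_rpow hβ.ne', mul_zero]
    exact Nat.cast_nonneg _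
  set δ := Metric.diam (S : Set (Ultralimit 𝒰 Xf p)) with hδdef
  set α := Set.infsep (S : Set (Ultralimit 𝒰 Xf p)) with hαdef
  have hα : 0 < α := S.infsep_pos_iff_nontrivial.2 hS
  have hαδ : α ≤ δ := by
    obtain ⟨x, hx, y, hy, hxy, hd⟩ := S.finite_toSet.infsep_exists_of_nontrivial hS
    rw [hαdef]; refine (le_of_eq hd).trans ?_
    exact Metric.dist_le_diam_of_mem S.finite_toSet.isBounded hx hy
  have hδ : 0 < δ := lt_of_lt_of_le hα hαδ
  choose rep hrepspec using fun s : Ultralimit 𝒰 Xf p => SeparationQuotient.surjective_mk s.1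
  have key : ∀ ε : ℝ, 0 < ε → ε < α / 2 → ε ≤ δ →
      C * ((δ - 2 * ε) / (α + ε)) ^ β ≤ (S.card : ℝ) := by
    intro ε hε hεα hεδ
    have hmem : ∀ᶠ i in (𝒰 : Filter ℕ), ∀ s ∈ S, ∀ t ∈ S,
        |w i * dist (e i (rep s i)) (e i (rep t i)) - dist s t| < ε := by
      rw [Filter.eventually_all_finset]
      intro s hs
      rw [Filter.eventually_all_finset]
      intro t ht
      have htd := tendsto_dist_ultralimit s t (rep s) (rep t) (hrepspec s) (hrepspec t)
      filter_upwards [htd (Metric.ball_mem_nhds _ hε)] with i hi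
      simp only [Set.mem_preimage, Metric.mem_ball, Real.dist_eq] at hi
      rw [← he]
      exact hi
    obtain ⟨i, hi⟩ := hmem.exists
    have hinj : Set.InjOn (fun s : Ultralimit 𝒰 Xf p => e i (rep s i))
        (S : Set (Ultralimit 𝒰 Xf p)) := by
      intro s hs t ht hst
      by_contra hne
      have h1 := hi s hs t ht
      have h0 : dist (e i (rep s i)) (e i (rep t i)) = 0 := by
        simp only at hst
        rw [hst, dist_self]
      rw [h0, mul_zero] at h1
      have h2 : dist s t < ε := by
        have := abs_of_nonneg (dist_nonneg (x := s) (y := t))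
        rw [zero_sub, abs_neg] at h1
        rw [← this]
        exact h1
      have h3 : α ≤ dist s t := Set.infsep_le_dist_of_mem hs ht hne
      linarith
    set T : Finset X := S.image (fun s => e i (rep s i)) with hTdef
    have hcard : T.card = S.card := Finset.card_image_of_injOn hinj
    have hdiamT : (δ - 2 * ε) / w i ≤ Metric.diam (T : Set X) := by
      obtain ⟨s, hs, t, ht, hst⟩ :=
        exists_lt_dist_of_lt_diam (s := (S : Set (Ultralimit 𝒰 Xf p)))
          (d := δ - ε) (by linarith) (by rw [← hδdef]; linarith)
      have h1 := hi s hs t ht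
      rw [abs_lt] at h1
      have h2 : (δ - 2 * ε) / w i ≤ dist (e i (rep s i)) (e i (rep t i)) := by
        rw [div_le_iff₀ (hw i)]
        nlinarith [h1.1]
      refine h2.trans (Metric.dist_le_diam_of_mem T.finite_toSet.isBounded ?_ ?_)
      · exact Finset.mem_coe.2 (Finset.mem_image_of_mem _ hs)
      · exact Finset.mem_coe.2 (Finset.mem_image_of_mem _ ht)
    have hTnt : ∃ s ∈ S, ∃ t ∈ S, s ≠ t ∧
        Set.infsep (S : Set (Ultralimit 𝒰 Xf p)) = dist s t := by
      obtain ⟨s, hs, t, ht, hst, hd⟩ := S.finite_toSet.infsep_exists_of_nontrivial hS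
      exact ⟨s, hs, t, ht, hst, hd⟩
    obtain ⟨s₀, hs₀, t₀, ht₀, hst₀, hd₀⟩ := hTnt
    rw [← hαdef] at hd₀
    have hne₀ : e i (rep s₀ i) ≠ e i (rep t₀ i) := by
      intro hcontra
      exact hst₀ (hinj hs₀ ht₀ hcontra)
    have hmem₀ : e i (rep s₀ i) ∈ (T : Set X) :=
      Finset.mem_coe.2 (Finset.mem_image_of_mem _ hs₀)
    have hmem₀' : e i (rep t₀ i) ∈ (T : Set X) :=
      Finset.mem_coe.2 (Finset.mem_image_of_mem _ ht₀)
    have hinfT : Set.infsep (T : Set X) ≤ (α + ε) / w i := by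
      have h1 := hi s₀ hs₀ t₀ ht₀
      rw [abs_lt] at h1
      have h2 : dist (e i (rep s₀ i)) (e i (rep t₀ i)) ≤ (α + ε) / w i := by
        rw [le_div_iff₀ (hw i)]
        nlinarith [h1.2]
      exact (Set.infsep_le_dist_of_mem hmem₀ hmem₀' hne₀).trans h2
    have hTpos : 0 < Set.infsep (T : Set X) :=
      T.infsep_pos_iff_nontrivial.2 ⟨_, hmem₀, _, hmem₀', hne₀⟩
    have hratio : (δ - 2 * ε) / (α + ε) ≤
        Metric.diam (T : Set X) / Set.infsep (T : Set X) := by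
      have h0 : (δ - 2 * ε) / (α + ε) = ((δ - 2 * ε) / w i) / ((α + ε) / w i) := by
        have hwne : w i ≠ 0 := (hw i).ne'
        have hane : α + ε ≠ 0 := by positivity
        field_simp
      rw [h0]
      exact div_le_div₀ Metric.diam_nonneg hdiamT hTpos hinfT
    calc C * ((δ - 2 * ε) / (α + ε)) ^ β
        ≤ C * (Metric.diam (T : Set X) / Set.infsep (T : Set X)) ^ β := by
          apply mul_le_mul_of_nonneg_left _ hC.le
          apply Real.rpow_le_rpow (div_nonneg (by linarith) (by linarith)) hratio hβ.le
      _ ≤ (T.card : ℝ) := hX T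
      _ = (S.card : ℝ) := by rw [hcard]
  have hcont : Tendsto (fun ε : ℝ => C * ((δ - 2 * ε) / (α + ε)) ^ β) (𝓝[>] (0 : ℝ))
      (𝓝 (C * (δ / α) ^ β)) := by
    have h2 : ContinuousAt (fun ε : ℝ => (δ - 2 * ε) / (α + ε)) 0 := by
      apply ContinuousAt.div
      · exact (continuous_const.sub (continuous_const.mul continuous_id)).continuousAt
      · exact (continuous_const.add continuous_id).continuousAt
      · simpa using hα.ne'
    have h3 : ContinuousAt (fun ε : ℝ => C * ((δ - 2 * ε) / (α + ε)) ^ β) 0 :=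
      (h2.rpow_const (Or.inr hβ.le)).const_mul C
    have h4 : Tendsto (fun ε : ℝ => C * ((δ - 2 * ε) / (α + ε)) ^ β) (𝓝[>] (0 : ℝ))
        (𝓝 (C * ((δ - 2 * (0 : ℝ)) / (α + 0)) ^ β)) :=
      h3.tendsto.mono_left nhdsWithin_le_nhds
    have h5 : (δ - 2 * (0 : ℝ)) / (α + 0) = δ / α := by norm_num
    rw [h5] at h4
    exact h4
  refine le_of_tendsto hcont ?_
  have hIoo : Set.Ioo (0 : ℝ) (min (α / 2) δ) ∈ 𝓝[>] (0 : ℝ) :=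
    Ioo_mem_nhdsGT_of_mem ⟨le_refl 0, lt_min (by linarith) hδ⟩
  filter_upwards [hIoo] with ε hε
  exact key ε hε.1 (lt_of_lt_of_le hε.2 (min_le_left _ _))
    (le_of_lt (lt_of_lt_of_le hε.2 (min_le_right _ _)))

/-- **Theorem 3.7.** The lower Assouad dimension of `X` is at most the lower Assouad
dimension of an ultralimit of rescaled subsets of `X` along a non-principal ultrafilter. -/
theorem lowerAssouadDim_le_ultralimit {X : Type u} [MetricSpace X]
    (A : ℕ → Set X) (u : ℕ → ℝ) (hu : ∀ i, 0 < u i)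
    (a : ℕ → X) (ha : ∀ i, a i ∈ A i)
    (𝒰 : Ultrafilter ℕ) (h𝒰 : (𝒰 : Filter ℕ) ≤ Filter.cofinite) :
    lowerAssouadDim X ≤
    @lowerAssouadDim
      (@Ultralimit 𝒰 (fun i => ↥(A i)) (fun i => scaledSubMS (A i) (u i) (hu i))
        (fun i => ⟨a i, ha i⟩))
      (@Ultralimit.metricSpace 𝒰 (fun i => ↥(A i)) (fun i => scaledSubMS (A i) (u i) (hu i))
        (fun i => ⟨a i, ha i⟩)) := by
  rw [lowerAssouadDim, lowerAssouadDim]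
  refine sSup_le_sSup (Set.image_mono ?_)
  rintro β ⟨hβ, C, hC, hX⟩
  refine ⟨hβ, C, hC, fun S => ?_⟩
  exact @lower_est_ultralimit (fun i => ↥(A i))
    (fun i => scaledSubMS (A i) (u i) (hu i)) X _
    (fun i x => (x : X)) u hu (fun i x y => scaled_dist_eq (A i) (u i) (hu i) x y)
    (fun i => ⟨a i, ha i⟩) 𝒰 β C hβ hC hX S

end
end

section
/- There exists an (ω₀+1)-metric space X such that every pointed proper length space (K, p) is a tangent cone of X at the unique accumulation point of X. -/
open Metric Filter Set
open scoped ENNReal NNReal Topology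

noncomputable section

universe u v

/-! ### Construction of the space `X` for Theorem 1.6 -/

namespace Omega1

/-- Index data for the "copies": a size `k`, a rational matrix, a scale exponent `j`,
and a multiplicity tag `m`. -/
def Idx : Type := Σ k : ℕ, (Fin k → Fin k → ℚ) × ℕ × ℕ

instance : Countable Idx := by unfold Idx; infer_instance

def code : Idx → ℕ := (exists_injective_nat Idx).choose

lemma code_inj : Function.Injective code := (exists_injective_nat Idx).choose_spec

def jj (n : Idx) : ℕ := n.2.2.1
def tt (n : Idx) : ℝ := (4 : ℝ)⁻¹ ^ code n
def ss (n : Idx) : ℝ := tt n / 2 ^ (jj n + 2)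

lemma tt_pos (n : Idx) : 0 < tt n := by unfold tt; positivity
lemma ss_pos (n : Idx) : 0 < ss n := div_pos (tt_pos n) (by positivity)
lemma tt_eq (n : Idx) : tt n = 2 ^ (jj n + 2) * ss n := by
  unfold ss; field_simp

/-- The (clamped) coordinates of the points of copy `n`. -/
def ww (n : Idx) (a l : Fin n.1) : ℝ :=
  max (-(2 ^ jj n)) (min (2 ^ jj n) ((n.2.1 a l : ℝ) - (n.2.1 ⟨0, a.pos⟩ l)))

lemma abs_ww_le (n : Idx) (a l : Fin n.1) : |ww n a l| ≤ 2 ^ jj n := by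
  have h2 : (0:ℝ) ≤ 2 ^ jj n := by positivity
  refine abs_le.2 ⟨le_max_left _ _, max_le (by linarith) (min_le_left _ _)⟩

lemma ww_zero (n : Idx) (h0 : 0 < n.1) (l : Fin n.1) : ww n ⟨0, h0⟩ l = 0 := by
  have h2 : (0:ℝ) ≤ 2 ^ jj n := by positivity
  simp [ww, le_min_iff, le_refl, h2, neg_nonpos.2 h2]

lemma ww_eq (n : Idx) (a l : Fin n.1)
    (h : |(n.2.1 a l : ℝ) - (n.2.1 ⟨0, a.pos⟩ l)| ≤ 2 ^ jj n) :
    ww n a l = (n.2.1 a l : ℝ) - (n.2.1 ⟨0, a.pos⟩ l) := by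
  rw [abs_le] at h
  rw [ww, min_eq_right h.2, max_eq_right h.1]

def Coord : Type := Idx × ℕ
instance : TopologicalSpace Coord := ⊥
instance : DiscreteTopology Coord := ⟨rfl⟩

open Classical in
/-- The coordinate function of the point `a` of copy `n`. -/
def pfun (n : Idx) (a : Fin n.1) : Coord → ℝ := fun c =>
  if c.1 = n then
    (if c.2 = 0 then tt n else if h : c.2 - 1 < n.1 then ss n * ww n a ⟨c.2 - 1, h⟩ else 0)
  else 0

lemma pfun_self0 (n : Idx) (a : Fin n.1) : pfun n a (n, 0) = tt n := by
  simp [pfun]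

lemma pfun_other (n : Idx) (a : Fin n.1) (c : Coord) (hc : c.1 ≠ n) : pfun n a c = 0 := by
  simp [pfun, hc]

lemma pfun_block (n : Idx) (a l : Fin n.1) : pfun n a (n, l.1 + 1) = ss n * ww n a l := by
  have h : l.1 + 1 - 1 < n.1 := by simpa using l.2
  have h3 : (⟨l.1 + 1 - 1, h⟩ : Fin n.1) = l := Fin.ext (by simp)
  simp only [pfun]
  rw [if_pos trivial, if_neg (Nat.succ_ne_zero l.1), dif_pos h, h3]

lemma pfun_cases (n : Idx) (a b : Fin n.1) (c : Coord) :
    (pfun n a c = pfun n b c) ∨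
      ∃ l : Fin n.1, pfun n a c = ss n * ww n a l ∧ pfun n b c = ss n * ww n b l := by
  unfold pfun
  split_ifs with h1 h2 h3
  · exact Or.inl rfl
  · exact Or.inr ⟨⟨c.2 - 1, h3⟩, rfl, rfl⟩
  · exact Or.inl rfl
  · exact Or.inl rfl

lemma abs_pfun_le (n : Idx) (a : Fin n.1) (c : Coord) : |pfun n a c| ≤ tt n := by
  have htp := tt_pos n
  have hsp := ss_pos n
  have hkey : ss n * 2 ^ jj n ≤ tt n := by
    rw [tt_eq n, pow_add]
    have h2 : (0:ℝ) < 2 ^ jj n := by positivity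
    nlinarith
  unfold pfun
  split_ifs with h1 h2 h3
  · rw [abs_of_pos htp]
  · rw [abs_mul, abs_of_pos hsp]
    calc ss n * |ww n a ⟨c.2 - 1, h3⟩| ≤ ss n * 2 ^ jj n :=
          mul_le_mul_of_nonneg_left (abs_ww_le _ _ _) hsp.le
      _ ≤ tt n := hkey
  · simpa using htp.le
  · simpa using htp.le

/-- The point `a` of copy `n`, as a bounded function. -/
def pt' (n : Idx) (a : Fin n.1) : BoundedContinuousFunction Coord ℝ :=
  BoundedContinuousFunction.ofNormedAddCommGroup (pfun n a) continuous_of_discreteTopology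
    (tt n) (fun c => by simpa [Real.norm_eq_abs] using abs_pfun_le n a c)

lemma pt'_apply (n : Idx) (a : Fin n.1) (c : Coord) : pt' n a c = pfun n a c := rfl

lemma dist_pt'_zero (n : Idx) (a : Fin n.1) : dist (pt' n a) 0 = tt n := by
  refine le_antisymm ?_ ?_
  · rw [BoundedContinuousFunction.dist_le (tt_pos n).le]
    intro c
    simpa [pt'_apply, Real.dist_eq] using abs_pfun_le n a c
  · have := BoundedContinuousFunction.dist_coe_le_dist (f := pt' n a) (g := 0) (n, 0)
    change dist (pfun n a ((n, 0) : Coord)) (0 : ℝ) ≤ _ at this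
    simpa [pt'_apply, pfun_self0, Real.dist_eq, abs_of_pos (tt_pos n)] using this

lemma dist_pt'_same (n : Idx) (a b : Fin n.1) :
    dist (pt' n a) (pt' n b) = ss n * ‖(fun l => ww n a l - ww n b l : Fin n.1 → ℝ)‖ := by
  have hsp := ss_pos n
  refine le_antisymm ?_ ?_
  · rw [BoundedContinuousFunction.dist_le (by positivity)]
    intro c
    rw [pt'_apply, pt'_apply, Real.dist_eq]
    rcases pfun_cases n a b c with h | ⟨l, ha, hb⟩
    · rw [h, sub_self, abs_zero]; positivity
    · rw [ha, hb, ← mul_sub, abs_mul, abs_of_pos hsp]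
      refine mul_le_mul_of_nonneg_left ?_ hsp.le
      simpa [Real.norm_eq_abs] using
        norm_le_pi_norm (fun l => ww n a l - ww n b l : Fin n.1 → ℝ) l
  · rw [mul_comm, ← le_div_iff₀ hsp]
    rw [pi_norm_le_iff_of_nonneg (by positivity)]
    intro l
    have := BoundedContinuousFunction.dist_coe_le_dist (f := pt' n a) (g := pt' n b)
      (n, l.1 + 1)
    change dist (pfun n a ((n, l.1 + 1) : Coord)) (pfun n b ((n, l.1 + 1) : Coord)) ≤ _ at this
    rw [pfun_block, pfun_block, Real.dist_eq, ← mul_sub, abs_mul,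
      abs_of_pos hsp] at this
    rw [Real.norm_eq_abs, le_div_iff₀ hsp, mul_comm]
    exact this

lemma dist_pt'_ne (n m : Idx) (a : Fin n.1) (b : Fin m.1) (h : m ≠ n) :
    tt n ≤ dist (pt' n a) (pt' m b) := by
  have := BoundedContinuousFunction.dist_coe_le_dist (f := pt' n a) (g := pt' m b) (n, 0)
  change dist (pfun n a ((n, 0) : Coord)) (pfun m b ((n, 0) : Coord)) ≤ _ at this
  have h0 : pfun m b ((n, 0) : Coord) = 0 := pfun_other m b _ (Ne.symm h)
  rw [pfun_self0, Real.dist_eq] at this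
  simp only [h0, sub_zero, abs_of_pos (tt_pos n)] at this
  exact this

lemma pt'_ne_zero (n : Idx) (a : Fin n.1) : pt' n a ≠ 0 := by
  intro h
  have := dist_pt'_zero n a
  rw [h, dist_self] at this
  exact (tt_pos n).ne this

lemma pt'_idx_eq {n m : Idx} {a : Fin n.1} {b : Fin m.1} (h : pt' n a = pt' m b) :
    n = m := by
  by_contra hnm
  have h1 := dist_pt'_ne n m a b (Ne.symm hnm)
  rw [h, dist_self] at h1
  exact absurd h1 (not_le.2 (tt_pos n))

/-- All the points of all the copies. -/
def Ep : (Σ n : Idx, Fin n.1) → BoundedContinuousFunction Coord ℝ := fun q => pt' q.1 q.2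

/-- The underlying set of the space `X`. -/
def XS : Set (BoundedContinuousFunction Coord ℝ) := insert 0 (Set.range Ep)

/-- The space `X` of Theorem 1.6. -/
def Xsp : Type := ↥XS

instance : MetricSpace Xsp := by unfold Xsp; infer_instance

/-- The accumulation point of `X`. -/
def x0 : Xsp := ⟨0, Set.mem_insert _ _⟩

lemma dist_xsp (z w : Xsp) : dist z w = dist z.1 w.1 := rfl

/-- Only finitely many points of `X` are `ε`-far from the origin. -/
lemma finite_far (ε : ℝ) (hε : 0 < ε) : {z ∈ XS | ε ≤ dist 0 z}.Finite := by
  classical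
  have h4 : Tendsto (fun c : ℕ => (4:ℝ)⁻¹ ^ c) atTop (𝓝 0) :=
    tendsto_pow_atTop_nhds_zero_of_lt_one (by norm_num) (by norm_num)
  obtain ⟨C, hC⟩ := (h4.eventually (eventually_lt_nhds hε)).exists_forall_of_atTop
  have hSc : {c : ℕ | ε ≤ (4:ℝ)⁻¹ ^ c}.Finite := by
    refine Set.Finite.subset (Set.finite_Iio C) (fun c hc => ?_)
    by_contra hcC
    exact absurd (hC c (not_lt.1 hcC)) (not_lt.2 hc)
  have hN : {n : Idx | ε ≤ tt n}.Finite := by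
    have : {n : Idx | ε ≤ tt n} = code ⁻¹' {c | ε ≤ (4:ℝ)⁻¹ ^ c} := rfl
    rw [this]
    exact Set.Finite.preimage (code_inj.injOn) hSc
  have hQ : {q : Σ n : Idx, Fin n.1 | ε ≤ tt q.1}.Finite := by
    refine Set.Finite.subset (Set.Finite.biUnion hN
      (fun n _ => (Set.finite_univ.image (Sigma.mk n)))) ?_
    rintro ⟨n, a⟩ hq
    exact Set.mem_biUnion hq ⟨a, Set.mem_univ _, rfl⟩
  refine Set.Finite.subset (hQ.image Ep) ?_
  rintro z ⟨hzX, hzd⟩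
  rcases hzX with rfl | ⟨q, rfl⟩
  · rw [dist_self] at hzd; exact absurd hzd (not_le.2 hε)
  · refine ⟨q, ?_, rfl⟩
    show ε ≤ tt q.1
    rw [dist_comm] at hzd
    simp only [Ep] at hzd
    rw [dist_pt'_zero] at hzd
    exact hzd

lemma isolated (z : Xsp) (hz : z ≠ x0) : IsOpen ({z} : Set Xsp) := by
  classical
  have hz1 : z.1 ≠ 0 := fun h => hz (Subtype.ext h)
  have hρ : 0 < dist (0 : BoundedContinuousFunction Coord ℝ) z.1 := by
    rw [dist_comm]
    exact dist_pos.2 hz1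
  obtain ⟨ρ, hρdef, hρ⟩ : ∃ ρ, ρ = dist (0 : BoundedContinuousFunction Coord ℝ) z.1 ∧
      0 < ρ := ⟨_, rfl, hρ⟩
  have hS : {w ∈ XS | ρ/2 ≤ dist 0 w}.Finite := finite_far _ (by linarith)
  have hkey : ({z} : Set Xsp) =
      Subtype.val ⁻¹' (Metric.ball z.1 (ρ/2) \ ({w ∈ XS | ρ/2 ≤ dist 0 w} \ {z.1})) := by
    ext w
    simp only [Set.mem_singleton_iff, Set.mem_preimage, Set.mem_diff, Metric.mem_ball,
      Set.mem_setOf_eq, Set.mem_sep_iff]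
    constructor
    · rintro rfl
      refine ⟨Metric.mem_ball_self (by linarith), fun h => h.2 rfl⟩
    · rintro ⟨hball, hnot⟩
      have hw : ρ/2 ≤ dist 0 w.1 := by
        have h3 := dist_triangle (0 : BoundedContinuousFunction Coord ℝ) w.1 z.1
        rw [← hρdef] at h3
        have h4 := Metric.mem_ball.1 hball
        linarith
      have : w.1 = z.1 := by
        by_contra hne
        exact hnot ⟨⟨w.2, hw⟩, hne⟩
      exact Subtype.ext this
  rw [hkey]
  exact (Metric.isOpen_ball.sdiff ((Set.Finite.diff hS).isClosed)).preimage continuous_subtype_val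

lemma not_accPt (z : Xsp) (hz : z ≠ x0) : ¬ AccPt z (𝓟 (Set.univ : Set Xsp)) := by
  intro h
  rw [accPt_iff_nhds] at h
  obtain ⟨y, hy, hne⟩ := h {z} ((isolated z hz).mem_nhds rfl)
  exact hne hy.1

/-- The "spine" copies witnessing that `x0` is an accumulation point. -/
def nn (m : ℕ) : Idx := ⟨1, (fun _ _ => 0, 0, m)⟩

lemma nn_inj : Function.Injective nn := fun a b h => by
  simpa [nn] using congrArg (fun n : Idx => n.2.2.2) h

def spine (m : ℕ) : Xsp :=
  ⟨pt' (nn m) ⟨0, one_pos⟩, Set.mem_insert_of_mem _ ⟨⟨nn m, ⟨0, one_pos⟩⟩, rfl⟩⟩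

lemma spine_ne (m : ℕ) : spine m ≠ x0 := fun h =>
  pt'_ne_zero (nn m) ⟨0, one_pos⟩ (congrArg Subtype.val h)

lemma inj_nat_tendsto {f : ℕ → ℕ} (hf : Function.Injective f) : Tendsto f atTop atTop := by
  rw [← Nat.cofinite_eq_atTop]
  exact hf.tendsto_cofinite

lemma tendsto_tt {g : ℕ → Idx} (hg : Function.Injective g) :
    Tendsto (fun m => tt (g m)) atTop (𝓝 0) := by
  have h1 : Tendsto (fun m => code (g m)) atTop atTop :=
    inj_nat_tendsto (code_inj.comp hg)
  exact (tendsto_pow_atTop_nhds_zero_of_lt_one (by norm_num) (by norm_num)).comp h1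

lemma tendsto_spine : Tendsto spine atTop (𝓝 x0) := by
  rw [tendsto_iff_dist_tendsto_zero]
  have : (fun m => dist (spine m) x0) = fun m => tt (nn m) := by
    funext m
    rw [dist_xsp]
    exact dist_pt'_zero (nn m) ⟨0, one_pos⟩
  rw [this]
  exact tendsto_tt nn_inj

lemma accPt_x0 : AccPt x0 (𝓟 (Set.univ : Set Xsp)) := by
  rw [accPt_iff_nhds]
  intro U hU
  obtain ⟨m, hm⟩ := (tendsto_spine.eventually_mem hU).exists
  exact ⟨spine m, ⟨hm, trivial⟩, spine_ne m⟩

instance : Countable Xsp := by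
  unfold Xsp
  exact ((Set.countable_range Ep).insert 0).to_subtype

lemma spine_inj : Function.Injective spine := by
  intro a b h
  have h1 : pt' (nn a) ⟨0, one_pos⟩ = pt' (nn b) ⟨0, one_pos⟩ := congrArg Subtype.val h
  exact nn_inj (pt'_idx_eq h1)

instance : Infinite {z : Xsp // z ≠ x0} :=
  Infinite.of_injective (fun m => (⟨spine m, spine_ne m⟩ : {z : Xsp // z ≠ x0}))
    (fun a b h => spine_inj (by simpa using congrArg Subtype.val h))

lemma omegaPlusOne : IsOmegaPlusOneSpace Xsp := by
  classical
  obtain ⟨d⟩ : Nonempty (Denumerable {z : Xsp // z ≠ x0}) :=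
    nonempty_denumerable_iff.2 ⟨inferInstance, inferInstance⟩
  let e : ℕ ≃ {z : Xsp // z ≠ x0} := (@Denumerable.eqv _ d).symm
  let φ : OnePoint ℕ ≃ Xsp :=
    { toFun := fun o => OnePoint.rec x0 (fun m => (e m).1) o
      invFun := fun z => if h : z = x0 then OnePoint.infty else ((e.symm ⟨z, h⟩ : ℕ) : OnePoint ℕ)
      left_inv := by
        refine fun o => OnePoint.rec ?_ ?_ o
        · have h1 : (OnePoint.rec x0 (fun m => ((e m : {z : Xsp // z ≠ x0}) : Xsp))
              OnePoint.infty : Xsp) = x0 := rfl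
          simp [h1]
        · intro m
          have hne := (e m).2
          simp only [OnePoint.rec]
          simp only [hne, ↓reduceDIte]
          norm_cast
          rw [show (⟨((e m) : {z : Xsp // z ≠ x0}).1, hne⟩ : {z : Xsp // z ≠ x0}) = e m from
            Subtype.ext rfl, Equiv.symm_apply_apply]
      right_inv := by
        intro z
        by_cases h : z = x0
        · simp only [dif_pos h]
          exact h.symm
        · simp only [dif_neg h]
          exact congrArg Subtype.val (e.apply_symm_apply ⟨z, h⟩) }
  have hφ : ∀ m : ℕ, φ (m : OnePoint ℕ) = (e m).1 := fun m => rfl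
  have hφi : φ OnePoint.infty = x0 := rfl
  have hcont : Continuous φ := by
    rw [OnePoint.continuous_iff_from_discrete, hφi]
    refine Metric.nhds_basis_ball.tendsto_right_iff.2 ?_
    intro ε hε
    rw [Filter.eventually_cofinite]
    have hS := finite_far ε hε
    have hinj : Function.Injective (fun m => ((e m : {z : Xsp // z ≠ x0}) : Xsp).1) :=
      fun a b h => e.injective (Subtype.ext (Subtype.ext h))
    refine Set.Finite.subset (hS.preimage hinj.injOn) ?_
    intro m hm
    simp only [Set.mem_preimage, Set.mem_setOf_eq] at hm ⊢
    refine ⟨((e m : {z : Xsp // z ≠ x0}) : Xsp).2, ?_⟩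
    rw [hφ m] at hm
    have hd : ¬ dist ((e m : {z : Xsp // z ≠ x0}) : Xsp) x0 < ε := fun hlt =>
      hm (Metric.mem_ball.2 hlt)
    rw [dist_xsp] at hd
    rw [dist_comm]
    exact not_lt.1 hd
  exact ⟨(Continuous.homeoOfEquivCompactToT2 (f := φ) hcont).symm⟩


/-- In a length space, one can travel distance `r` towards `y` staying within `r` of `x`. -/
lemma shrink {K : Type u} [MetricSpace K] (hK : IsLengthSpace K) (x y : K) (r δ : ℝ)
    (hr : 0 ≤ r) (hδ : 0 < δ) :
    ∃ z : K, dist x z ≤ r ∧ dist z y ≤ max (dist x y - r) 0 + δ := by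
  classical
  have hlt : (⨅ γ : Path x y, eVariationOn γ Set.univ) < edist x y + ENNReal.ofReal (δ/2) := by
    rw [← hK x y]
    exact ENNReal.lt_add_right (edist_ne_top x y)
      (by rw [Ne, ENNReal.ofReal_eq_zero]; linarith)
  obtain ⟨γ, hγ⟩ := iInf_lt_iff.1 hlt
  have huc : UniformContinuous ⇑γ := CompactSpace.uniformContinuous_of_continuous γ.continuous
  rw [Metric.uniformContinuous_iff] at huc
  obtain ⟨η, hη, hmesh⟩ := huc (δ/2) (by linarith)
  obtain ⟨N', hN'⟩ := exists_nat_one_div_lt hη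
  have hNpos : (0:ℝ) < (N' + 1 : ℕ) := by positivity
  obtain ⟨N, hNd, hNpos, hNlt⟩ : ∃ N : ℕ, N = N' + 1 ∧ (0:ℝ) < N ∧ 1 / (N:ℝ) < η :=
    ⟨N' + 1, rfl, hNpos, by exact_mod_cast hN'⟩
  have hmem : ∀ j : ℕ, min ((j : ℝ) / N) 1 ∈ unitInterval :=
    fun j => ⟨le_min (by positivity) zero_le_one, min_le_right _ _⟩
  set u : ℕ → unitInterval := fun j => ⟨min ((j : ℝ) / N) 1, hmem j⟩ with hu
  have humono : Monotone u := by
    intro a b hab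
    show min ((a : ℝ) / N) 1 ≤ min ((b : ℝ) / N) 1
    exact min_le_min (by gcongr <;> exact_mod_cast hab) le_rfl
  set P : ℕ → K := fun j => γ (u j) with hP
  have hP0 : P 0 = x := by
    have h0 : u 0 = 0 := by
      apply Subtype.ext
      show min (((0:ℕ) : ℝ) / N) 1 = ((0 : unitInterval) : ℝ)
      norm_num
    show γ (u 0) = x
    rw [h0]
    exact γ.source
  have hPN : P N = y := by
    have h1 : u N = 1 := by
      apply Subtype.ext
      show min ((N : ℝ) / N) 1 = 1
      rw [div_self hNpos.ne', min_self]
    show γ (u N) = y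
    rw [h1]
    exact γ.target
  set S : ℕ → ℝ := fun j => ∑ l ∈ Finset.range j, dist (P l) (P (l + 1)) with hS
  have hS0 : S 0 = 0 := by simp [hS]
  have hSsucc : ∀ j, S (j + 1) = S j + dist (P j) (P (j + 1)) := by
    intro j; rw [hS]; exact Finset.sum_range_succ _ _
  -- mesh bound
  have hstep : ∀ j : ℕ, dist (P j) (P (j + 1)) < δ/2 := by
    intro j
    apply hmesh
    have hdu : dist (u j) (u (j + 1)) ≤ 1 / N := by
      rw [Subtype.dist_eq]
      show dist (min ((j : ℝ) / N) 1) (min (((j + 1 : ℕ) : ℝ) / N) 1) ≤ 1 / N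
      rw [Real.dist_eq]
      calc |min ((j : ℝ) / N) 1 - min (((j + 1 : ℕ) : ℝ) / N) 1|
          ≤ max |(j : ℝ) / N - ((j + 1 : ℕ) : ℝ) / N| |(1:ℝ) - 1| :=
            abs_min_sub_min_le_max _ _ _ _
        _ ≤ 1 / N := by
            rw [sub_self, abs_zero]
            refine max_le ?_ (by positivity)
            rw [div_sub_div_same, Nat.cast_succ]
            rw [show (j : ℝ) - ((j : ℝ) + 1) = -1 by ring]
            rw [abs_div, abs_neg, abs_one, abs_of_pos hNpos]
    exact lt_of_le_of_lt hdu hNlt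
  -- total bound
  have hSN : S N ≤ dist x y + δ/2 := by
    have hsum := eVariationOn.sum_le (f := ⇑γ) (n := N) humono (fun i => Set.mem_univ (u i))
    have h1 : ∑ i ∈ Finset.range N, edist (γ (u (i + 1))) (γ (u i))
        = ENNReal.ofReal (S N) := by
      rw [hS, ENNReal.ofReal_sum_of_nonneg (fun i _ => dist_nonneg)]
      refine Finset.sum_congr rfl (fun i _ => ?_)
      rw [edist_dist, dist_comm]
    have h2 : ENNReal.ofReal (S N) ≤ ENNReal.ofReal (dist x y + δ/2) := by
      rw [← h1]
      refine le_trans hsum (le_trans hγ.le (le_of_eq ?_))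
      rw [edist_dist, ← ENNReal.ofReal_add dist_nonneg (by linarith)]
    rwa [ENNReal.ofReal_le_ofReal_iff (by positivity)] at h2
  -- chains
  have hchain1 : ∀ j, dist x (P j) ≤ S j := by
    intro j
    induction j with
    | zero => rw [hP0, hS0, dist_self]
    | succ j ih =>
        calc dist x (P (j+1)) ≤ dist x (P j) + dist (P j) (P (j+1)) := dist_triangle _ _ _
          _ ≤ S j + dist (P j) (P (j+1)) := by linarith
          _ = S (j+1) := (hSsucc j).symm
  have hchain2 : ∀ i j, dist (P j) (P (j + i)) ≤ S (j + i) - S j := by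
    intro i
    induction i with
    | zero => intro j; simp
    | succ i ih =>
        intro j
        have h1 := hSsucc (j + i)
        calc dist (P j) (P (j + (i+1)))
            ≤ dist (P j) (P (j + i)) + dist (P (j + i)) (P (j + i + 1)) := by
              rw [show j + (i+1) = j + i + 1 from rfl]
              exact dist_triangle _ _ _
          _ ≤ (S (j + i) - S j) + dist (P (j + i)) (P (j + i + 1)) := by
              have := ih j; linarith
          _ = S (j + i + 1) - S j := by rw [h1]; ring
  -- choose the furthest index with `S j ≤ r`
  set j₀ : ℕ := Nat.findGreatest (fun j => S j ≤ r) N with hj₀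
  have hj₀le : j₀ ≤ N := Nat.findGreatest_le N
  have hj₀spec : S j₀ ≤ r := by
    rw [hj₀]
    exact Nat.findGreatest_spec (P := fun j => S j ≤ r) (Nat.zero_le N)
      (by show S 0 ≤ r; rw [hS0]; exact hr)
  refine ⟨P j₀, le_trans (hchain1 j₀) hj₀spec, ?_⟩
  rcases eq_or_lt_of_le hj₀le with heq | hlt'
  · rw [heq, hPN, dist_self]
    positivity
  · have hgr : ¬ S (j₀ + 1) ≤ r := by
      refine Nat.findGreatest_is_greatest (P := fun j => S j ≤ r) (n := N) (k := j₀ + 1)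
        ?_ ?_
      · rw [← hj₀]; exact Nat.lt_succ_self _
      · omega
    have hlow : r - δ/2 < S j₀ := by
      have h1 := hSsucc j₀
      have h2 := hstep j₀
      have h3 : r < S (j₀ + 1) := not_le.1 hgr
      linarith
    have h4 : dist (P j₀) y ≤ S N - S j₀ := by
      have := hchain2 (N - j₀) j₀
      rw [Nat.add_sub_cancel' hj₀le] at this
      rw [← hPN]
      exact this
    calc dist (P j₀) y ≤ S N - S j₀ := h4
      _ ≤ (dist x y + δ/2) - (r - δ/2) := by linarith
      _ = dist x y - r + δ := by ring
      _ ≤ max (dist x y - r) 0 + δ := by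
          have := le_max_left (dist x y - r) 0
          linarith


lemma ss_inv (n : Idx) : (ss n)⁻¹ = 2 ^ (jj n + 2) * 4 ^ code n := by
  rw [ss, tt, inv_div, inv_pow]; field_simp

lemma scaled_dist {A : Set Xsp} (h : ℝ) (hh : 0 < h) (z w : A) :
    @dist _ (scaledSubMS A h hh).toDist z w = h * dist z.1.1 w.1.1 := rfl

lemma cast_succ_lt_pow (i : ℕ) : ((i : ℝ) + 1) < 2 ^ (i + 5) := by
  have h1 : i + 1 < 2 ^ (i + 5) := by
    calc i + 1 < 2 ^ (i + 1) := Nat.lt_two_pow_self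
      _ ≤ 2 ^ (i + 5) := Nat.pow_le_pow_right (by norm_num) (by omega)
  exact_mod_cast h1

lemma cast_add_two_le_pow (i : ℕ) : ((i : ℝ) + 2) ≤ 2 ^ (i + 3) := by
  have h1 : i + 2 ≤ 2 ^ (i + 3) := by
    have h2 : i + 2 < 2 ^ (i + 2) := Nat.lt_two_pow_self
    have h3 : 2 ^ (i + 2) ≤ 2 ^ (i + 3) := Nat.pow_le_pow_right (by norm_num) (by omega)
    omega
  exact_mod_cast h1

end Omega1

set_option maxHeartbeats 2000000 in
/-- **Theorem 1.6.** There exists an `(ω₀+1)`-metric space `X` such that every pointed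
proper length space `(K, p)` is a tangent cone of `X` at its unique accumulation point. -/
theorem exists_omegaPlusOne_space_with_all_tangentCones :
    ∃ (X : Type) (_ : MetricSpace X) (x₀ : X), IsOmegaPlusOneSpace X ∧
      AccPt x₀ (𝓟 (Set.univ : Set X)) ∧
      (∀ y : X, AccPt y (𝓟 (Set.univ : Set X)) → y = x₀) ∧
      ∀ (K : Type u) (_ : MetricSpace K) (p : K), ProperSpace K → IsLengthSpace K →
        IsTangentCone X x₀ K p := by
  classical
  refine ⟨Omega1.Xsp, inferInstance, Omega1.x0, Omega1.omegaPlusOne, Omega1.accPt_x0,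
    fun y hy => by_contra fun hne => Omega1.not_accPt y hne hy, ?_⟩
  intro K mK p hprop hlen
  letI := mK
  haveI := hprop
  set δ : ℕ → ℝ := fun i => ((i : ℝ) + 1)⁻¹ with hδdef
  have hδpos : ∀ i, 0 < δ i := fun i => by rw [hδdef]; positivity
  have hδle1 : ∀ i, δ i ≤ 1 := fun i => by
    rw [hδdef]
    dsimp only
    rw [show (1:ℝ) = 1⁻¹ by norm_num]
    exact inv_anti₀ (by norm_num) (by push_cast; linarith)
  -- finite nets of the balls `B(p, i+1)`
  have hnet : ∀ i : ℕ, ∃ (k : ℕ) (x : Fin (k + 1) → K),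
      x 0 = p ∧ (∀ a, dist p (x a) ≤ (i : ℝ) + 1) ∧
      ∀ y : K, dist p y ≤ (i : ℝ) + 1 → ∃ a, dist y (x a) ≤ δ i := by
    intro i
    have hcomp : IsCompact (Metric.closedBall p ((i : ℝ) + 1)) := isCompact_closedBall _ _
    obtain ⟨t, ht1, ht2⟩ := hcomp.elim_nhds_subcover (fun y => Metric.ball y (δ i))
      (fun y _ => Metric.ball_mem_nhds y (hδpos i))
    refine ⟨t.card, Fin.cases p (fun b => ((t.equivFin.symm b) : K)), ?_, ?_, ?_⟩
    · simp only [Fin.cases_zero]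
    · intro a
      refine Fin.cases ?_ ?_ a
      · simp only [Fin.cases_zero, dist_self]
        positivity
      · intro b
        simp only [Fin.cases_succ]
        have hmem := ht1 _ (t.equivFin.symm b).2
        rw [Metric.mem_closedBall] at hmem
        rw [dist_comm]
        exact hmem
    · intro y hy
      have hy2 : y ∈ Metric.closedBall p ((i : ℝ) + 1) := by
        rw [Metric.mem_closedBall, dist_comm]; exact hy
      obtain ⟨c, hct, hcy⟩ := Set.mem_iUnion₂.1 (ht2 hy2)
      refine ⟨Fin.succ (t.equivFin ⟨c, hct⟩), ?_⟩
      simp only [Fin.cases_succ, Equiv.symm_apply_apply]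
      exact (Metric.mem_ball.1 hcy).le
  choose k x hx0 hxball hxnet using hnet
  -- rational perturbations of the distance matrices
  have hDex : ∀ (i : ℕ) (a b : Fin (k i + 1)), ∃ q : ℚ,
      dist (x i a) (x i b) < (q : ℝ) ∧ (q : ℝ) < dist (x i a) (x i b) + δ i :=
    fun i a b => exists_rat_btwn (lt_add_of_pos_right _ (hδpos i))
  choose D hD1 hD2 using hDex
  set ι : ℕ → Omega1.Idx := fun i => ⟨k i + 1, (D i, i + 3, i)⟩ with hιdef
  have hιinj : Function.Injective ι := by
    intro a b h
    have h2 := congrArg (fun n : Omega1.Idx => n.2.2.2) h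
    simpa [hιdef] using h2
  -- no clamping occurs for these indices
  have hDbound : ∀ i (a l : Fin (k i + 1)),
      |(D i a l : ℝ) - (D i 0 l : ℝ)| ≤ 2 ^ (i + 3) := by
    intro i a l
    have h1 := hD1 i a l
    have h2 := hD2 i a l
    have h3 := hD1 i 0 l
    have h4 := hD2 i 0 l
    obtain ⟨h5a, h5b⟩ := abs_le.1 (abs_dist_sub_le (x i a) (x i 0) (x i l))
    have h6 : dist (x i a) (x i 0) ≤ (i : ℝ) + 1 := by
      rw [hx0 i, dist_comm]; exact hxball i a
    have h7 := hδle1 i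
    have h8 := Omega1.cast_add_two_le_pow i
    rw [abs_le]
    constructor <;> linarith
  have hclamp : ∀ i (a l : Fin (k i + 1)),
      Omega1.ww (ι i) a l = (D i a l : ℝ) - (D i 0 l : ℝ) := by
    intro i a l
    have h0 : (⟨0, a.pos⟩ : Fin (k i + 1)) = 0 := Fin.ext (by simp)
    have h1 : Omega1.ww (ι i) a l = ((ι i).2.1 a l : ℝ) - ((ι i).2.1 ⟨0, a.pos⟩ l : ℝ) := by
      refine Omega1.ww_eq (ι i) a l ?_
      show |(D i a l : ℝ) - (D i ⟨0, a.pos⟩ l : ℝ)| ≤ 2 ^ (i + 3)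
      rw [h0]
      exact hDbound i a l
    rw [h1]
    show (D i a l : ℝ) - (D i ⟨0, a.pos⟩ l : ℝ) = _
    rw [h0]
  -- comparison of the coordinate norms with the distances in `K`
  have hW : ∀ i (a b : Fin (k i + 1)),
      |‖(fun l => Omega1.ww (ι i) a l - Omega1.ww (ι i) b l : Fin (k i + 1) → ℝ)‖ - dist (x i a) (x i b)| ≤ δ i := by
    intro i a b
    have hub : ∀ l : Fin (k i + 1), |Omega1.ww (ι i) a l - Omega1.ww (ι i) b l|
        ≤ dist (x i a) (x i b) + δ i := by
      intro l
      rw [hclamp, hclamp]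
      have h1 := hD1 i a l
      have h2 := hD2 i a l
      have h3 := hD1 i b l
      have h4 := hD2 i b l
      obtain ⟨h5a, h5b⟩ := abs_le.1 (abs_dist_sub_le (x i a) (x i b) (x i l))
      rw [abs_le]
      constructor <;> linarith
    have hnub : ‖(fun l => Omega1.ww (ι i) a l - Omega1.ww (ι i) b l : Fin (k i + 1) → ℝ)‖ ≤ dist (x i a) (x i b) + δ i := by
      rw [pi_norm_le_iff_of_nonneg (by positivity)]
      intro l
      simpa [Real.norm_eq_abs] using hub l
    have hnlb : dist (x i a) (x i b) - δ i ≤ ‖(fun l => Omega1.ww (ι i) a l - Omega1.ww (ι i) b l : Fin (k i + 1) → ℝ)‖ := by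
      have h6 : |Omega1.ww (ι i) a b - Omega1.ww (ι i) b b| ≤ ‖(fun l => Omega1.ww (ι i) a l - Omega1.ww (ι i) b l : Fin (k i + 1) → ℝ)‖ := by
        simpa [Real.norm_eq_abs] using
          norm_le_pi_norm (fun l => Omega1.ww (ι i) a l - Omega1.ww (ι i) b l :
            Fin (k i + 1) → ℝ) b
      have h8 : Omega1.ww (ι i) a b - Omega1.ww (ι i) b b = (D i a b : ℝ) - (D i b b : ℝ) := by
        rw [hclamp, hclamp]; ring
      have h1 := hD1 i a b
      have h4 := hD2 i b b
      have hds : dist (x i b) (x i b) = 0 := dist_self _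
      have h9 := le_abs_self (Omega1.ww (ι i) a b - Omega1.ww (ι i) b b)
      rw [h8] at h9
      rw [h8] at h6
      linarith [h6, (abs_le.1 h6).1]
    rw [abs_le]
    exact ⟨by linarith, by linarith⟩
  -- the points of `X` attached to this `K`
  have hmemXS : ∀ i (a : Fin (k i + 1)), Omega1.pt' (ι i) a ∈ Omega1.XS :=
    fun i a => Set.mem_insert_of_mem _ ⟨⟨ι i, a⟩, rfl⟩
  set XP : ∀ i : ℕ, Fin (k i + 1) → Omega1.Xsp :=
    fun i a => ⟨Omega1.pt' (ι i) a, hmemXS i a⟩ with hXPdef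
  set pt : ℕ → Omega1.Xsp := fun i => XP i 0 with hptdef
  set r : ℕ → ℝ := fun i => (Omega1.ss (ι i))⁻¹ with hrdef
  have hrpos : ∀ i, 0 < r i := fun i => by
    rw [hrdef]; exact inv_pos.2 (Omega1.ss_pos _)
  have hRr : ∀ (c : ℝ) (i : ℕ), c / r i = c * Omega1.ss (ι i) := by
    intro c i
    rw [hrdef]
    dsimp only
    rw [div_eq_mul_inv, inv_inv]
  have hptval : ∀ i, (pt i).1 = Omega1.pt' (ι i) (0 : Fin (k i + 1)) := fun i => rfl
  refine ⟨pt, r, hrpos, ?_, ?_, ?_⟩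
  · -- `pt i → x0`
    rw [tendsto_iff_dist_tendsto_zero]
    have heq : (fun i => dist (pt i) Omega1.x0) = fun i => Omega1.tt (ι i) := by
      funext i
      rw [Omega1.dist_xsp]
      exact Omega1.dist_pt'_zero (ι i) 0
    rw [heq]
    exact Omega1.tendsto_tt hιinj
  · -- `r i → ∞`
    have hge : ∀ i, (4 : ℝ) ^ (Omega1.code (ι i)) ≤ r i := by
      intro i
      rw [hrdef]
      dsimp only
      rw [Omega1.ss_inv]
      have h1 : (1:ℝ) ≤ 2 ^ (Omega1.jj (ι i) + 2) := one_le_pow₀ (by norm_num)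
      nlinarith [pow_pos (by norm_num : (0:ℝ) < 4) (Omega1.code (ι i))]
    refine tendsto_atTop_mono hge ?_
    exact (tendsto_pow_atTop_atTop_of_one_lt (by norm_num : (1:ℝ) < 4)).comp
      (Omega1.inj_nat_tendsto (Omega1.code_inj.comp hιinj))
  · -- the main convergence statement
    intro R hR
    obtain ⟨N, hN1, hN2⟩ : ∃ N : ℕ, (∀ i, N ≤ i → R ≤ (i : ℝ) + 1) ∧
        (∀ i, N ≤ i → 2 * δ i ≤ R) := by
      refine ⟨⌈R⌉₊ + ⌈2 / R⌉₊, fun i hi => ?_, fun i hi => ?_⟩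
      · have h1 := Nat.le_ceil R
        have h2 : (⌈R⌉₊ : ℝ) ≤ i := by exact_mod_cast le_trans (Nat.le_add_right _ _) hi
        linarith
      · have h1 := Nat.le_ceil (2 / R)
        have h2 : (⌈2/R⌉₊ : ℝ) ≤ i := by exact_mod_cast le_trans (Nat.le_add_left _ _) hi
        have h3 : 2 / R ≤ (i : ℝ) + 1 := by linarith
        rw [div_le_iff₀ hR] at h3
        have h4 : (0:ℝ) < (i : ℝ) + 1 := by positivity
        rw [hδdef]
        dsimp only
        rw [← div_eq_mul_inv, div_le_iff₀ h4]
        nlinarith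
    set ε : ℕ → ℝ := fun i => if i < N then 2 * R + 1 else 15 * δ i with hεdef
    have hεpos : ∀ i, 0 < ε i := fun i => by
      rw [hεdef]
      dsimp only
      split_ifs
      · linarith
      · have := hδpos i; linarith
    have hεto : Tendsto ε atTop (𝓝 0) := by
      have h2 : Tendsto δ atTop (𝓝 0) := by
        rw [hδdef]
        exact tendsto_one_div_add_atTop_nhds_zero_nat.congr (fun i => by rw [one_div])
      have h1 : Tendsto (fun i : ℕ => 15 * δ i) atTop (𝓝 0) := by
        simpa using h2.const_mul (15:ℝ)
      refine Tendsto.congr' ?_ h1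
      filter_upwards [eventually_ge_atTop N] with i hi
      rw [hεdef]
      dsimp only
      rw [if_neg (not_lt.2 hi)]
    -- the points of a small ball around `pt i` all lie in the copy `ι i`
    have hball : ∀ i : ℕ, R ≤ (i : ℝ) + 1 → ∀ z : Omega1.Xsp,
        dist z (pt i) ≤ R / r i → ∃ b : Fin (k i + 1),
          z.1 = Omega1.pt' (ι i) b ∧ ‖(fun l => Omega1.ww (ι i) b l - Omega1.ww (ι i) (0 : Fin (k i + 1)) l : Fin (k i + 1) → ℝ)‖ ≤ R := by
      intro i hiR z hz
      have hss := Omega1.ss_pos (ι i)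
      rw [hRr R i] at hz
      rw [Omega1.dist_xsp] at hz
      rw [hptval i] at hz
      have hlt_tt : R * Omega1.ss (ι i) < Omega1.tt (ι i) := by
        rw [Omega1.tt_eq]
        have h1 : R < 2 ^ (Omega1.jj (ι i) + 2) := by
          have h2 := Omega1.cast_succ_lt_pow i
          have hjj : Omega1.jj (ι i) + 2 = i + 5 := rfl
          rw [hjj]
          linarith
        exact mul_lt_mul_of_pos_right h1 hss
      rcases z.2 with hz0 | ⟨q, hq⟩
      · exfalso
        rw [hz0, dist_comm, Omega1.dist_pt'_zero] at hz
        linarith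
      · by_cases hqι : q.1 = ι i
        · obtain ⟨n', b⟩ := q
          dsimp only at hqι
          subst hqι
          have hqv : Omega1.pt' (ι i) b = z.1 := hq
          refine ⟨b, hqv.symm, ?_⟩
          rw [← hqv, Omega1.dist_pt'_same] at hz
          rw [mul_comm R (Omega1.ss (ι i))] at hz
          exact le_of_mul_le_mul_left hz hss
        · exfalso
          have hd := Omega1.dist_pt'_ne (ι i) q.1 (0 : Fin (k i + 1)) q.2 hqι
          have hqv : Omega1.pt' q.1 q.2 = z.1 := hq
          rw [hqv, dist_comm] at hd
          linarith
    -- construction of the approximations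
    have hmain : ∀ i : ℕ,
        ∃ (f : ↥(Metric.closedBall (pt i) (R / r i)) → ↥(Metric.closedBall p R))
          (g : ↥(Metric.closedBall p R) → ↥(Metric.closedBall (pt i) (R / r i))),
          (@IsApproximation _ _ (scaledSubMS _ (r i) (hrpos i)) _ (ε i) f g) ∧
          f ⟨pt i, Metric.mem_closedBall_self (le_of_lt (div_pos hR (hrpos i)))⟩
            = ⟨p, Metric.mem_closedBall_self hR.le⟩ ∧
          g ⟨p, Metric.mem_closedBall_self hR.le⟩
            = ⟨pt i, Metric.mem_closedBall_self (le_of_lt (div_pos hR (hrpos i)))⟩ := by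
      intro i
      have hq0 : (0:ℝ) ≤ R / r i := (div_pos hR (hrpos i)).le
      have hri := hrpos i
      have hsd : ∀ (z w : ↥(Metric.closedBall (pt i) (R / r i))),
          @dist _ (scaledSubMS _ (r i) (hrpos i)).toDist z w = r i * dist z.1 w.1 :=
        fun z w => rfl
      have hrR : r i * (R / r i) = R := by field_simp
      by_cases hiN : i < N
      · -- crude approximation for small `i`
        have hεi : ε i = 2 * R + 1 := by rw [hεdef]; exact if_pos hiN
        refine ⟨fun _ => ⟨p, Metric.mem_closedBall_self hR.le⟩,
          fun _ => ⟨pt i, Metric.mem_closedBall_self hq0⟩, ⟨?_, ?_, ?_, ?_⟩, rfl, rfl⟩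
        · intro z z'
          rw [hsd z z', hεi, Subtype.dist_eq, dist_self]
          have h1 : dist z.1 z'.1 ≤ R / r i + R / r i := by
            have h2 := Metric.mem_closedBall.1 z.2
            have h3 := Metric.mem_closedBall.1 z'.2
            have h4 := dist_triangle z.1 (pt i) z'.1
            have h5 : dist (pt i) z'.1 = dist z'.1 (pt i) := dist_comm _ _
            linarith
          have h6 : r i * dist z.1 z'.1 ≤ 2 * R := by
            have := mul_le_mul_of_nonneg_left h1 hri.le
            rw [mul_add, hrR] at this
            linarith
          rw [sub_zero, abs_of_nonneg (by positivity)]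
          exact lt_of_le_of_lt h6 (by linarith)
        · intro y y'
          rw [hsd, hεi, dist_self, mul_zero, Subtype.dist_eq, sub_zero,
            abs_of_nonneg dist_nonneg]
          have h2 := Metric.mem_closedBall.1 y.2
          have h3 := Metric.mem_closedBall.1 y'.2
          have h4 := dist_triangle y.1 p y'.1
          have h5 : dist p y'.1 = dist y'.1 p := dist_comm _ _
          linarith
        · intro z
          rw [hsd, hεi]
          have h2 := Metric.mem_closedBall.1 z.2
          have h3 : dist (pt i) z.1 = dist z.1 (pt i) := dist_comm _ _
          have h6 : r i * dist (pt i) z.1 ≤ R := by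
            have := mul_le_mul_of_nonneg_left h2 hri.le
            rw [hrR] at this
            linarith [mul_le_mul_of_nonneg_left (le_of_eq h3) hri.le]
          calc r i * dist ((⟨pt i, Metric.mem_closedBall_self hq0⟩ :
              ↥(Metric.closedBall (pt i) (R / r i))) : _).1 z.1 = r i * dist (pt i) z.1 := rfl
            _ ≤ R := h6
            _ < 2 * R + 1 := by linarith
        · intro y
          rw [hεi, Subtype.dist_eq]
          have h2 := Metric.mem_closedBall.1 y.2
          calc dist ((⟨p, Metric.mem_closedBall_self hR.le⟩ :
              ↥(Metric.closedBall p R)) : _).1 y.1 = dist p y.1 := rfl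
            _ = dist y.1 p := dist_comm _ _
            _ ≤ R := h2
            _ < 2 * R + 1 := by linarith
      · -- the genuine approximation for large `i`
        have hNle : N ≤ i := not_lt.1 hiN
        have hiR := hN1 i hNle
        have hiδ := hN2 i hNle
        have hδp := hδpos i
        have hεi : ε i = 15 * δ i := by rw [hεdef]; exact if_neg hiN
        -- retractions toward the ball `B(p, R)`
        have hshr : ∀ a : Fin (k i + 1), ∃ z : K, dist p z ≤ R ∧
            dist z (x i a) ≤ max (dist p (x i a) - R) 0 + δ i :=
          fun a => Omega1.shrink hlen p (x i a) R (δ i) hR.le hδp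
        choose F hF1 hF2 using hshr
        have hF2' : ∀ a, dist p (x i a) ≤ R + δ i → dist (F a) (x i a) ≤ 2 * δ i := by
          intro a ha
          have h1 := hF2 a
          have hmax : max (dist p (x i a) - R) 0 ≤ δ i := max_le (by linarith) hδp.le
          linarith
        have hGex : ∀ y : K, dist p y ≤ R → ∃ a : Fin (k i + 1),
            dist y (x i a) ≤ 4 * δ i ∧ dist p (x i a) ≤ R - δ i := by
          intro y hy
          obtain ⟨z, hz1, hz2⟩ := Omega1.shrink hlen p y (R - 2 * δ i) (δ i)
            (by linarith) hδp
          have hz2' : dist z y ≤ 3 * δ i := by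
            have hmax : max (dist p y - (R - 2 * δ i)) 0 ≤ 2 * δ i :=
              max_le (by linarith) (by linarith)
            linarith
          obtain ⟨a, ha⟩ := hxnet i z (by linarith)
          refine ⟨a, ?_, ?_⟩
          · have h1 := dist_triangle y z (x i a)
            have h2 : dist y z = dist z y := dist_comm _ _
            linarith
          · have h1 := dist_triangle p z (x i a)
            linarith
        -- choice of coordinates for the points of the small ball
        choose bb hbb1 hbb2 using fun (z : ↥(Metric.closedBall (pt i) (R / r i))) =>
          hball i hiR z.1 (Metric.mem_closedBall.1 z.2)
        have hFmem : ∀ a, F a ∈ Metric.closedBall p R :=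
          fun a => Metric.mem_closedBall.2 (by rw [dist_comm]; exact hF1 a)
        set f : ↥(Metric.closedBall (pt i) (R / r i)) → ↥(Metric.closedBall p R) :=
          fun z => if z.1 = pt i then ⟨p, Metric.mem_closedBall_self hR.le⟩
            else ⟨F (bb z), hFmem (bb z)⟩ with hfdef
        choose aa haa1 haa2 using fun (y : ↥(Metric.closedBall p R)) =>
          hGex y.1 (by rw [dist_comm]; exact Metric.mem_closedBall.1 y.2)
        have hXPmem : ∀ a : Fin (k i + 1), dist p (x i a) ≤ R - δ i →
            XP i a ∈ Metric.closedBall (pt i) (R / r i) := by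
          intro a ha
          rw [Metric.mem_closedBall, Omega1.dist_xsp, hptval i]
          have h1 : dist (XP i a).1 (Omega1.pt' (ι i) (0 : Fin (k i + 1)))
              = Omega1.ss (ι i) * ‖(fun l => Omega1.ww (ι i) a l - Omega1.ww (ι i) (0 : Fin (k i + 1)) l : Fin (k i + 1) → ℝ)‖ := Omega1.dist_pt'_same (ι i) a 0
          rw [show (XP i a).1 = Omega1.pt' (ι i) a from rfl] at h1 ⊢
          rw [h1, hRr R i]
          have h2 := hW i a (0 : Fin (k i + 1))
          rw [hx0 i] at h2
          have h3 : dist (x i a) p = dist p (x i a) := dist_comm _ _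
          have h4 : ‖(fun l => Omega1.ww (ι i) a l - Omega1.ww (ι i) (0 : Fin (k i + 1)) l : Fin (k i + 1) → ℝ)‖ ≤ R := by
            have h5 := (abs_le.1 h2).2
            linarith
          have hss := Omega1.ss_pos (ι i)
          nlinarith
        set g : ↥(Metric.closedBall p R) → ↥(Metric.closedBall (pt i) (R / r i)) :=
          fun y => if y.1 = p then ⟨pt i, Metric.mem_closedBall_self hq0⟩
            else ⟨XP i (aa y), hXPmem (aa y) (haa2 y)⟩ with hgdef
        set cc : ↥(Metric.closedBall p R) → Fin (k i + 1) :=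
          fun y => if y.1 = p then 0 else aa y with hccdef
        -- multiplicative identities
        have hrs : r i * Omega1.ss (ι i) = 1 := by
          rw [hrdef]
          exact inv_mul_cancel₀ (Omega1.ss_pos _).ne'
        have hT1 : ∀ (b b' : Fin (k i + 1)),
            r i * dist (Omega1.pt' (ι i) b) (Omega1.pt' (ι i) b') = ‖(fun l => Omega1.ww (ι i) b l - Omega1.ww (ι i) b' l : Fin (k i + 1) → ℝ)‖ := by
          intro b b'
          rw [Omega1.dist_pt'_same, ← mul_assoc, hrs, one_mul]
        have hT0 : ∀ (b b' : Fin (k i + 1)),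
            Omega1.pt' (ι i) b = Omega1.pt' (ι i) b' → dist (x i b) (x i b') ≤ δ i := by
          intro b b' hpp
          have h2 : r i * dist (Omega1.pt' (ι i) b) (Omega1.pt' (ι i) b') = 0 := by
            rw [hpp, dist_self, mul_zero]
          have h3 : ‖(fun l => Omega1.ww (ι i) b l - Omega1.ww (ι i) b' l : Fin (k i + 1) → ℝ)‖ = 0 := by rw [← hT1 b b', h2]
          have h4 := hW i b b'
          rw [h3] at h4
          have h5 := (abs_le.1 h4).1
          linarith
        -- the values of `f` and `g`
        have hgval : ∀ y, (g y).1.1 = Omega1.pt' (ι i) (cc y) := by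
          intro y
          rw [hgdef, hccdef]
          dsimp only
          split_ifs with h
          · exact hptval i
          · rfl
        have hgy : ∀ y, dist y.1 (x i (cc y)) ≤ 4 * δ i := by
          intro y
          rw [hccdef]
          dsimp only
          split_ifs with h
          · rw [hx0 i, h, dist_self]
            linarith
          · exact haa1 y
        have hC1 : ∀ z, dist p (x i (bb z)) ≤ R + δ i := by
          intro z
          have h1 := hW i (bb z) (0 : Fin (k i + 1))
          rw [hx0 i] at h1
          have h2 := hbb2 z
          have h3 := (abs_le.1 h1).1
          have h4 : dist p (x i (bb z)) = dist (x i (bb z)) p := dist_comm _ _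
          linarith
        have hfz : ∀ z, dist ((f z) : K) (x i (bb z)) ≤ 3 * δ i := by
          intro z
          rw [hfdef]
          dsimp only
          split_ifs with h
          · show dist p (x i (bb z)) ≤ 3 * δ i
            have hpp : Omega1.pt' (ι i) (bb z) = Omega1.pt' (ι i) (0 : Fin (k i + 1)) := by
              rw [← hbb1 z]
              exact congrArg Subtype.val h
            have h6 := hT0 _ _ hpp
            rw [hx0 i] at h6
            have h7 : dist p (x i (bb z)) = dist (x i (bb z)) p := dist_comm _ _
            linarith
          · show dist (F (bb z)) (x i (bb z)) ≤ 3 * δ i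
            have := hF2' (bb z) (hC1 z)
            linarith
        have hfmem : ∀ z, dist p ((f z) : K) ≤ R := by
          intro z
          have h1 := Metric.mem_closedBall.1 (f z).2
          rw [dist_comm]
          exact h1
        refine ⟨f, g, ⟨?_, ?_, ?_, ?_⟩, ?_, ?_⟩
        · -- distortion of `f`
          intro z z'
          rw [hsd z z', Omega1.dist_xsp, hbb1 z, hbb1 z', hT1, hεi, Subtype.dist_eq]
          have h1 := abs_le.1 (hW i (bb z) (bb z'))
          have h2 := hfz z
          have h3 := hfz z'
          have h4 := dist_triangle4 (x i (bb z)) ((f z) : K) ((f z') : K) (x i (bb z'))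
          have h5 := dist_triangle4 ((f z) : K) (x i (bb z)) (x i (bb z')) ((f z') : K)
          have hc1 : dist (x i (bb z)) ((f z) : K) = dist ((f z) : K) (x i (bb z)) :=
            dist_comm _ _
          have hc2 : dist ((f z') : K) (x i (bb z')) = dist (x i (bb z')) ((f z') : K) :=
            dist_comm _ _
          rw [abs_lt]
          constructor <;> [skip; skip] <;> linarith
        · -- distortion of `g`
          intro y y'
          rw [hsd, Omega1.dist_xsp, hgval y, hgval y', hT1, hεi, Subtype.dist_eq]
          have h1 := abs_le.1 (hW i (cc y) (cc y'))
          have h2 := hgy y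
          have h3 := hgy y'
          have h4 := dist_triangle4 (x i (cc y)) (y : K) (y' : K) (x i (cc y'))
          have h5 := dist_triangle4 (y : K) (x i (cc y)) (x i (cc y')) (y' : K)
          have hc1 : dist (x i (cc y)) (y : K) = dist (y : K) (x i (cc y)) := dist_comm _ _
          have hc2 : dist (y' : K) (x i (cc y')) = dist (x i (cc y')) (y' : K) :=
            dist_comm _ _
          rw [abs_lt]
          constructor <;> [skip; skip] <;> linarith
        · -- `g ∘ f` is close to the identity
          intro z
          rw [hsd, Omega1.dist_xsp, hgval (f z), hbb1 z, hT1, hεi]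
          have h1 := (abs_le.1 (hW i (cc (f z)) (bb z))).2
          have h2 := hgy (f z)
          have h3 := hfz z
          have h4 := dist_triangle (x i (cc (f z))) ((f z) : K) (x i (bb z))
          have hc1 : dist (x i (cc (f z))) ((f z) : K)
              = dist ((f z) : K) (x i (cc (f z))) := dist_comm _ _
          linarith
        · -- `f ∘ g` is close to the identity
          intro y
          rw [Subtype.dist_eq, hεi]
          have hpp : Omega1.pt' (ι i) (bb (g y)) = Omega1.pt' (ι i) (cc y) :=
            (hbb1 (g y)).symm.trans (hgval y)
          have h1 := hT0 _ _ hpp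
          have h2 := hfz (g y)
          have h3 := hgy y
          have h4 := dist_triangle4 ((f (g y)) : K) (x i (bb (g y))) (x i (cc y)) (y : K)
          have hc1 : dist (x i (cc y)) (y : K) = dist (y : K) (x i (cc y)) := dist_comm _ _
          linarith
        · -- the base point is preserved by `f`
          rw [hfdef]
          dsimp only
          rw [if_pos rfl]
        · -- the base point is preserved by `g`
          rw [hgdef]
          dsimp only
          rw [if_pos rfl]
    choose f g h1 h2 h3 using hmain
    exact ⟨ε, f, g, hεpos, hεto, fun i => ⟨h1 i, h2 i, h3 i⟩⟩


end
end
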